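/- Let χ ∈ C³(Ω,ℝ) and let W ∈ C³(Ω,ℂ) satisfy the main Vekua equation ∂_z̄ W = (∂_z̄ χ) · conj(W) on Ω. Then the real-valued functions ψ^{(0)} = Im W and ψ^{(2)} = Re W satisfy H^{(0)} ψ^{(0)} = 0 and H^{(2)} ψ^{(2)} = 0, where H^{(0)} = −Δ + Σ_k((∂_kχ)² − ∂_k²χ) and H^{(2)} = −Δ + Σ_k((∂_kχ)² + ∂_k²χ). -/

import Mathlib

/-!
Applying `4 ∂_z` to the Vekua equation `∂_z̄ W = (∂_z̄ χ) W̄` and using `4 ∂_z ∂_z̄ = Δ`,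
`∂_z W̄ = conj (∂_z̄ W)` and the equation once more gives
`ΔW = Δχ · W̄ + 4 |∂_z̄ χ|² W = Δχ · W̄ + |∇χ|² W`.
Since `Im W̄ = -Im W` and `Re W̄ = Re W`, the imaginary and real parts of this identity are
`H⁽⁰⁾ (Im W) = 0` and `H⁽²⁾ (Re W) = 0`.
-/

noncomputable section
open Complex

/-- ∂_x of a complex-valued function on ℂ ≅ ℝ². -/
def dx (w : ℂ → ℂ) : ℂ → ℂ := fun z => fderiv ℝ w z 1

/-- ∂_y of a complex-valued function on ℂ ≅ ℝ². -/
def dy (w : ℂ → ℂ) : ℂ → ℂ := fun z => fderiv ℝ w z Complex.I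

/-- ∂_z = (∂_x - i∂_y)/2. -/
def dz (w : ℂ → ℂ) : ℂ → ℂ := fun z => (dx w z - Complex.I * dy w z) / 2

/-- ∂_z̄ = (∂_x + i∂_y)/2. -/
def dzb (w : ℂ → ℂ) : ℂ → ℂ := fun z => (dx w z + Complex.I * dy w z) / 2

/-- A real-valued function viewed as complex-valued. -/
def cc (χ : ℂ → ℝ) : ℂ → ℂ := fun z => (χ z : ℂ)

/-- V = ∂_z̄ - (∂_z̄χ)·C. -/
def Vop (χ : ℂ → ℝ) (w : ℂ → ℂ) : ℂ → ℂ :=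
  fun z => dzb w z - dzb (cc χ) z * (starRingEnd ℂ) (w z)

/-- V̄ = ∂_z - (∂_zχ)·C. -/
def Vbar (χ : ℂ → ℝ) (w : ℂ → ℂ) : ℂ → ℂ :=
  fun z => dz w z - dz (cc χ) z * (starRingEnd ℂ) (w z)

/-- V₁ = ∂_z̄ + (∂_zχ)·C. -/
def V1 (χ : ℂ → ℝ) (w : ℂ → ℂ) : ℂ → ℂ :=
  fun z => dzb w z + dz (cc χ) z * (starRingEnd ℂ) (w z)

/-- V̄₁ = ∂_z + (∂_z̄χ)·C. -/
def Vbar1 (χ : ℂ → ℝ) (w : ℂ → ℂ) : ℂ → ℂ :=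
  fun z => dz w z + dzb (cc χ) z * (starRingEnd ℂ) (w z)

/-- Partial derivative ∂_i of a real-valued function on ℂ ≅ ℝ². -/
def pdc (i : Fin 2) (f : ℂ → ℝ) : ℂ → ℝ :=
  fun z => fderiv ℝ f z (if i = 0 then 1 else Complex.I)

/-- H^{(0)} = -Δ + Σ_k ((∂_kχ)² - ∂_k²χ) acting on real functions on ℂ. -/
def H0c (χ f : ℂ → ℝ) : ℂ → ℝ := fun z =>
  -(pdc 0 (pdc 0 f) z + pdc 1 (pdc 1 f) z) +
    (∑ k : Fin 2, ((pdc k χ z) ^ 2 - pdc k (pdc k χ) z)) * f z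

/-- H^{(2)} = -Δ + Σ_k ((∂_kχ)² + ∂_k²χ). -/
def H2c (χ f : ℂ → ℝ) : ℂ → ℝ := fun z =>
  -(pdc 0 (pdc 0 f) z + pdc 1 (pdc 1 f) z) +
    (∑ k : Fin 2, ((pdc k χ z) ^ 2 + pdc k (pdc k χ) z)) * f z

/-- H^{(1)}_{ij} = δ_{ij} H^{(0)} + 2∂_i∂_jχ. -/
def H1c (χ : ℂ → ℝ) (i j : Fin 2) (f : ℂ → ℝ) : ℂ → ℝ := fun z =>
  (if i = j then H0c χ f z else 0) + 2 * pdc i (pdc j χ) z * f z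

open Complex ComplexConjugate Filter Topology Laplacian InnerProductSpace

section

variable {E F : Type*} [NormedAddCommGroup E] [NormedSpace ℝ E] [NormedAddCommGroup F]
  [NormedSpace ℝ F] {z : ℂ}

theorem ContDiffAt.differentiableAt_fderiv {f : E → F} {x : E} (hf : ContDiffAt ℝ 2 f x) :
    DifferentiableAt ℝ (fderiv ℝ f) x :=
  (hf.fderiv_right le_rfl).differentiableAt one_ne_zero

theorem fderiv_fderiv_apply {f : E → F} {x : E} (hf : DifferentiableAt ℝ (fderiv ℝ f) x)
    (v w : E) : fderiv ℝ (fun y => fderiv ℝ f y w) x v = fderiv ℝ (fderiv ℝ f) x v w := by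
  rw [fderiv_clm_apply hf (differentiableAt_const w)]
  simp

theorem laplacian_eq_fderiv_fderiv_complexPlane (f : ℂ → F) :
    Δ f z = fderiv ℝ (fderiv ℝ f) z 1 1 + fderiv ℝ (fderiv ℝ f) z I I := by
  simp [laplacian_eq_iteratedFDeriv_complexPlane, iteratedFDeriv_two_apply]

theorem pdc_pdc_add_pdc_pdc_eq_laplacian {f : ℂ → ℝ} (hf : ContDiffAt ℝ 2 f z) :
    pdc 0 (pdc 0 f) z + pdc 1 (pdc 1 f) z = Δ f z := by
  unfold pdc
  simp [fderiv_fderiv_apply hf.differentiableAt_fderiv, laplacian_eq_fderiv_fderiv_complexPlane]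

theorem ContDiffAt.differentiableAt_dzb {f : ℂ → ℂ} (hf : ContDiffAt ℝ 2 f z) :
    DifferentiableAt ℝ (dzb f) z := by
  have := hf.differentiableAt_fderiv
  unfold dzb dx dy
  fun_prop

theorem fderiv_dzb_apply {f : ℂ → ℂ} (hf : DifferentiableAt ℝ (fderiv ℝ f) z) (v : ℂ) :
    fderiv ℝ (dzb f) z v
      = (fderiv ℝ (fderiv ℝ f) z v 1 + I * fderiv ℝ (fderiv ℝ f) z v I) / 2 := by
  have h1 : DifferentiableAt ℝ (fun ζ => fderiv ℝ f ζ 1) z := by fun_prop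
  have hI : DifferentiableAt ℝ (fun ζ => fderiv ℝ f ζ I) z := by fun_prop
  have hsum : DifferentiableAt ℝ (fun ζ => fderiv ℝ f ζ 1 + I * fderiv ℝ f ζ I) z := by fun_prop
  unfold dzb dx dy
  simp_rw [div_eq_mul_inv]
  rw [fderiv_mul_const hsum, fderiv_fun_add h1 (hI.const_mul I), fderiv_const_mul hI]
  simp only [add_apply, smul_apply, smul_eq_mul, fderiv_fderiv_apply hf]
  ring

theorem four_mul_dz_dzb {f : ℂ → ℂ} (hf : ContDiffAt ℝ 2 f z) :
    4 * dz (dzb f) z = Δ f z := by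
  have hsymm := hf.isSymmSndFDerivAt (by simp) 1 I
  rw [laplacian_eq_fderiv_fderiv_complexPlane]
  simp only [dz, dx, dy, fderiv_dzb_apply hf.differentiableAt_fderiv]
  linear_combination I * hsymm - (fderiv ℝ (fderiv ℝ f) z I I) * I_sq

theorem dz_mul {f g : ℂ → ℂ} (hf : DifferentiableAt ℝ f z) (hg : DifferentiableAt ℝ g z) :
    dz (fun ζ => f ζ * g ζ) z = dz f z * g z + f z * dz g z := by
  simp only [dz, dx, dy, fderiv_fun_mul hf hg, add_apply, smul_apply, smul_eq_mul]
  ring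

theorem dz_conj (f : ℂ → ℂ) :
    dz (fun ζ => conj (f ζ)) z = conj (dzb f z) := by
  simp only [dz, dzb, dx, dy, ← star_def, fderiv_star, ContinuousLinearMap.comp_apply,
    ContinuousLinearEquiv.coe_coe, starL'_apply]
  simp only [star_def, map_div₀, map_add, map_mul, conj_I, map_ofNat]
  ring

theorem Filter.EventuallyEq.dz_eq {f g : ℂ → ℂ} (h : f =ᶠ[𝓝 z] g) : dz f z = dz g z := by
  simp only [dz, dx, dy, h.fderiv_eq]

theorem ContDiffAt.laplacian_re {f : ℂ → ℂ} (hf : ContDiffAt ℝ 2 f z) :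
    Δ (fun ζ => (f ζ).re) z = (Δ f z).re :=
  hf.laplacian_CLM_comp_left (l := reCLM)

theorem ContDiffAt.laplacian_im {f : ℂ → ℂ} (hf : ContDiffAt ℝ 2 f z) :
    Δ (fun ζ => (f ζ).im) z = (Δ f z).im :=
  hf.laplacian_CLM_comp_left (l := imCLM)

theorem ContDiffAt.laplacian_cc {χ : ℂ → ℝ} (hχ : ContDiffAt ℝ 2 χ z) :
    Δ (cc χ) z = Δ χ z :=
  hχ.laplacian_CLM_comp_left (l := ofRealCLM)

theorem fderiv_cc_apply {χ : ℂ → ℝ} (hχ : DifferentiableAt ℝ χ z) (v : ℂ) :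
    fderiv ℝ (cc χ) z v = fderiv ℝ χ z v := by
  have : cc χ = ofRealCLM ∘ χ := rfl
  rw [this, fderiv_comp z ofRealCLM.differentiableAt hχ]
  simp

theorem four_mul_dzb_cc_mul_conj {χ : ℂ → ℝ} (hχ : DifferentiableAt ℝ χ z) :
    4 * (dzb (cc χ) z * conj (dzb (cc χ) z)) = ((pdc 0 χ z ^ 2 + pdc 1 χ z ^ 2 : ℝ) : ℂ) := by
  simp only [dzb, dx, dy, pdc, fderiv_cc_apply hχ]
  simp only [map_div₀, map_add, map_mul, conj_ofReal, conj_I, map_ofNat, ↓reduceIte,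
    one_ne_zero, ofReal_add, ofReal_pow]
  linear_combination (-(fderiv ℝ χ z I : ℂ) ^ 2) * I_sq

theorem laplacian_eq_of_vekua {χ : ℂ → ℝ} {W : ℂ → ℂ} (hχ : ContDiffAt ℝ 2 χ z)
    (hW : ContDiffAt ℝ 2 W z) (hV : dzb W =ᶠ[𝓝 z] fun ζ => dzb (cc χ) ζ * conj (W ζ)) :
    Δ W z = Δ χ z * conj (W z) + ((pdc 0 χ z ^ 2 + pdc 1 χ z ^ 2 : ℝ) : ℂ) * W z := by
  have hχc : ContDiffAt ℝ 2 (cc χ) z := ofRealCLM.contDiff.contDiffAt.comp z hχ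
  have hWc : DifferentiableAt ℝ (fun ζ => conj (W ζ)) z :=
    (hW.differentiableAt two_ne_zero).star
  calc Δ W z = 4 * dz (dzb W) z := (four_mul_dz_dzb hW).symm
    _ = 4 * dz (fun ζ => dzb (cc χ) ζ * conj (W ζ)) z := by rw [hV.dz_eq]
    _ = 4 * dz (dzb (cc χ)) z * conj (W z) + 4 * (dzb (cc χ) z * conj (dzb W z)) := by
        rw [dz_mul hχc.differentiableAt_dzb hWc, dz_conj]; ring
    _ = Δ (cc χ) z * conj (W z) + 4 * (dzb (cc χ) z * conj (dzb (cc χ) z)) * W z := by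
        rw [four_mul_dz_dzb hχc, hV.eq_of_nhds, map_mul, conj_conj]; ring
    _ = _ := by
        rw [hχ.laplacian_cc, four_mul_dzb_cc_mul_conj (hχ.differentiableAt two_ne_zero)]

theorem H0c_eq_laplacian {χ f : ℂ → ℝ} (hχ : ContDiffAt ℝ 2 χ z) (hf : ContDiffAt ℝ 2 f z) :
    H0c χ f z = -Δ f z + (pdc 0 χ z ^ 2 + pdc 1 χ z ^ 2 - Δ χ z) * f z := by
  rw [H0c, pdc_pdc_add_pdc_pdc_eq_laplacian hf, Fin.sum_univ_two, ← pdc_pdc_add_pdc_pdc_eq_laplacian hχ]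
  ring

theorem H2c_eq_laplacian {χ f : ℂ → ℝ} (hχ : ContDiffAt ℝ 2 χ z) (hf : ContDiffAt ℝ 2 f z) :
    H2c χ f z = -Δ f z + (pdc 0 χ z ^ 2 + pdc 1 χ z ^ 2 + Δ χ z) * f z := by
  rw [H2c, pdc_pdc_add_pdc_pdc_eq_laplacian hf, Fin.sum_univ_two, ← pdc_pdc_add_pdc_pdc_eq_laplacian hχ]
  ring

end

/-- Solutions of the main Vekua equation give ground states of H^{(0)} and H^{(2)}. -/
theorem Vekua_to_ground_states (Ω : Set ℂ) (hΩ : IsOpen Ω)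
    (χ : ℂ → ℝ) (hχ : ContDiffOn ℝ 3 χ Ω)
    (W : ℂ → ℂ) (hW : ContDiffOn ℝ 3 W Ω)
    (hVekua : ∀ z ∈ Ω, dzb W z = dzb (cc χ) z * (starRingEnd ℂ) (W z)) :
    ∀ z ∈ Ω,
      H0c χ (fun ζ => (W ζ).im) z = 0 ∧
      H2c χ (fun ζ => (W ζ).re) z = 0 := by
  intro z hz
  have hΩz : Ω ∈ 𝓝 z := hΩ.mem_nhds hz
  have hχz : ContDiffAt ℝ 2 χ z := (hχ.contDiffAt hΩz).of_le (by norm_num)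
  have hWz : ContDiffAt ℝ 2 W z := (hW.contDiffAt hΩz).of_le (by norm_num)
  have hΔW := laplacian_eq_of_vekua hχz hWz (eventually_of_mem hΩz hVekua)
  have hvz : ContDiffAt ℝ 2 (fun ζ => (W ζ).im) z := imCLM.contDiff.contDiffAt.comp z hWz
  have huz : ContDiffAt ℝ 2 (fun ζ => (W ζ).re) z := reCLM.contDiff.contDiffAt.comp z hWz
  constructor
  · rw [H0c_eq_laplacian hχz hvz, hWz.laplacian_im, hΔW]
    simp only [add_im, im_ofReal_mul, conj_im]
    ring
  · rw [H2c_eq_laplacian hχz huz, hWz.laplacian_re, hΔW]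
    simp only [add_re, re_ofReal_mul, conj_re]
    ring
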